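/- Let f : [0, ∞) → ℝ be increasing and concave. Let x₁, ..., xₙ be positive semidefinite matrices and φ₁, ..., φₙ positive linear maps on matrices with ∑ᵢ φᵢ(1) = 1, and assume ∑ᵢ φᵢ(xᵢ) ≤ ‖∑ᵢ φᵢ(xᵢ)‖·1 (which holds for the operator norm). Then ∑ᵢ φᵢ(f(xᵢ)) ≤ f(‖∑ᵢ φᵢ(xᵢ)‖)·1. -/

import Mathlib

open Matrix
open scoped ComplexOrder Classical

/-- Functional calculus for (Hermitian) matrices via the spectral theorem. -/
noncomputable def fc {n : ℕ} (f : ℝ → ℝ) (A : Matrix (Fin n) (Fin n) ℂ) :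
    Matrix (Fin n) (Fin n) ℂ :=
  if h : A.IsHermitian then
    (h.eigenvectorUnitary : Matrix (Fin n) (Fin n) ℂ) *
      Matrix.diagonal (fun i => (f (h.eigenvalues i) : ℂ)) *
      (star h.eigenvectorUnitary : Matrix (Fin n) (Fin n) ℂ)
  else 0

/-- The Loewner order: `A ≤ B` iff `B - A` is positive semidefinite. -/
def Loewner {n : ℕ} (A B : Matrix (Fin n) (Fin n) ℂ) : Prop := (B - A).PosSemidef

/-- The operator norm of a matrix acting on Euclidean space. -/
noncomputable def opNorm {n : ℕ} (A : Matrix (Fin n) (Fin n) ℂ) : ℝ :=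
  ‖Matrix.toEuclideanCLM (𝕜 := ℂ) (n := Fin n) A‖

/-!
Since `f` is increasing and concave, at `y = ‖∑ φᵢ(xᵢ)‖` it has a supporting line of slope
`k ≥ 0`, `f t ≤ f y + k (t - y)`, valid at all eigenvalues `t` of all the `xᵢ` (only finitely
many points are needed, which matters at `y = 0` where a concave function may have infinite
slope). Functional calculus turns this into `f(xᵢ) ≤ (f y - k y) • 1 + k • xᵢ`; the positive
unital map `∑ φᵢ` preserves it, and `∑ φᵢ(xᵢ) ≤ y • 1` then yields `f y • 1`.
-/

open scoped MatrixOrder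

theorem ConcaveOn.exists_nonneg_supporting_line_of_finite {D T : Set ℝ} {f : ℝ → ℝ}
    (hf : ConcaveOn ℝ D f) (hmono : MonotoneOn f D) {y : ℝ} (hy : y ∈ D)
    (hT : T.Finite) (hTD : T ⊆ D) :
    ∃ k, 0 ≤ k ∧ ∀ t ∈ T, f t ≤ f y + k * (t - y) := by
  set slopes := insert 0 ((fun t => (f t - f y) / (t - y)) '' {t ∈ T | y < t})
  have hbdd : BddAbove slopes := (((hT.subset (Set.sep_subset _ _)).image _).insert 0).bddAbove
  refine ⟨sSup slopes, le_csSup hbdd (Set.mem_insert _ _), fun t ht => ?_⟩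
  rcases lt_trichotomy t y with hty | rfl | hyt
  · have hle : sSup slopes ≤ (f y - f t) / (y - t) := by
      refine csSup_le (Set.insert_nonempty _ _) ?_
      rintro _ (rfl | ⟨u, ⟨huT, hyu⟩, rfl⟩)
      · exact div_nonneg (sub_nonneg.2 (hmono (hTD ht) hy hty.le)) (sub_nonneg.2 hty.le)
      · exact hf.slope_anti_adjacent (hTD ht) (hTD huT) hty hyu
    rw [le_div_iff₀ (sub_pos.2 hty)] at hle
    linarith
  · simp
  · have hle : (f t - f y) / (t - y) ≤ sSup slopes :=
      le_csSup hbdd (Set.mem_insert_of_mem _ ⟨t, ⟨ht, hyt⟩, rfl⟩)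
    rw [div_le_iff₀ (sub_pos.2 hyt)] at hle
    linarith

theorem loewner_iff_le {n : ℕ} {A B : Matrix (Fin n) (Fin n) ℂ} : Loewner A B ↔ A ≤ B :=
  Iff.rfl

theorem fc_eq_cfc {n : ℕ} (f : ℝ → ℝ) {A : Matrix (Fin n) (Fin n) ℂ} (hA : A.IsHermitian) :
    fc f A = cfc f A := by
  rw [hA.cfc_eq, fc, dif_pos hA]
  rfl

theorem fc_le_affine {n : ℕ} {f : ℝ → ℝ} {A : Matrix (Fin n) (Fin n) ℂ} (hA : A.IsHermitian)
    {c k : ℝ} (h : ∀ t ∈ spectrum ℝ A, f t ≤ c + k * t) :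
    fc f A ≤ c • 1 + k • A := by
  have hcfc : cfc (fun t : ℝ => c + k * t) A = c • 1 + k • A := by
    rw [cfc_add .., cfc_const c A, cfc_const_mul .., cfc_id' ℝ A,
      Algebra.algebraMap_eq_smul_one]
  rw [fc_eq_cfc f hA, ← hcfc]
  exact cfc_mono h (A.finite_real_spectrum.continuousOn _)

theorem LinearMap.monotone_of_map_posSemidef {m : Type*} [Fintype m] {𝕜 : Type*} [RCLike 𝕜]
    {φ : Matrix m m 𝕜 →ₗ[𝕜] Matrix m m 𝕜} (hφ : ∀ A, A.PosSemidef → (φ A).PosSemidef) :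
    Monotone φ := fun A B hAB => by
  rw [Matrix.le_iff, ← map_sub]
  exact hφ _ hAB

theorem stmt_7 {n N : ℕ} (f : ℝ → ℝ)
    (hmono : MonotoneOn f (Set.Ici 0)) (hf : ConcaveOn ℝ (Set.Ici 0) f)
    (x : Fin N → Matrix (Fin n) (Fin n) ℂ) (hx : ∀ i, (x i).PosSemidef)
    (φ : Fin N → (Matrix (Fin n) (Fin n) ℂ →ₗ[ℂ] Matrix (Fin n) (Fin n) ℂ))
    (hφ : ∀ i A, A.PosSemidef → (φ i A).PosSemidef)
    (hunital : ∑ i, φ i 1 = 1)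
    (hbound : Loewner (∑ i, φ i (x i))
      ((opNorm (∑ i, φ i (x i)) : ℝ) • (1 : Matrix (Fin n) (Fin n) ℂ))) :
    Loewner (∑ i, φ i (fc f (x i)))
      ((f (opNorm (∑ i, φ i (x i))) : ℝ) • (1 : Matrix (Fin n) (Fin n) ℂ)) := by
  set y := opNorm (∑ i, φ i (x i))
  have hy : y ∈ Set.Ici 0 := norm_nonneg _
  obtain ⟨k, hk0, hk⟩ := hf.exists_nonneg_supporting_line_of_finite hmono hy (Set.finite_iUnion fun i => (x i).finite_real_spectrum)
    (Set.iUnion_subset fun i _ ht => spectrum_nonneg_of_nonneg (hx i).nonneg ht)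
  have hfx (i : Fin N) : fc f (x i) ≤ (f y - k * y) • 1 + k • x i :=
    fc_le_affine (hx i).1 fun t ht => by linarith [hk t (Set.mem_iUnion_of_mem i ht)]
  rw [loewner_iff_le] at hbound ⊢
  calc ∑ i, φ i (fc f (x i))
      ≤ ∑ i, φ i ((f y - k * y) • 1 + k • x i) :=
        Finset.sum_le_sum fun i _ => LinearMap.monotone_of_map_posSemidef (hφ i) (hfx i)
    _ = (f y - k * y) • 1 + k • ∑ i, φ i (x i) := by
        simp only [map_add, LinearMap.map_smul_of_tower, Finset.sum_add_distrib,
          ← Finset.smul_sum, hunital]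
    _ ≤ (f y - k * y) • 1 + k • (y • 1) := by gcongr
    _ = f y • 1 := by
        rw [smul_smul, ← add_smul]
        ring_nf
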